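/- There exists an absolute constant c ≥ 1 with the following property. Let q(x₀,x₁,x₂,x₃) = a₀x₀² + a₁x₁² + a₂x₂² + a₃x₃² and r(x₀,x₁,x₂,x₃) = b₀x₀² + b₁x₁² + b₂x₂² + b₃x₃² be a primitive pair of diagonal quadratic forms with integer coefficients such that d_ij = a_i b_j − a_j b_i ≠ 0 for all 0 ≤ i < j ≤ 3, let B ≥ 3 be real with (max_i |a_i|)·(max_i |b_i|) ≤ B^{160}, and let k ≥ 1 be an integer. Then there exists a prime p not dividing 2·∏_{0≤i<j≤3} d_ij such that 2·B^{4k/(8k−1)} / H(C)^{(4k²−4k+1)/(4k(8k−1))} < p ≤ c·( B^{4k/(8k−1)} / H(C)^{(4k²−4k+1)/(4k(8k−1))} + 1 + log B ). -/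

import Mathlib

open scoped BigOperators

/-- `d_{ij} = a_i b_j - a_j b_i`. -/
def dd (a b : Fin 4 → ℤ) (i j : Fin 4) : ℤ := a i * b j - a j * b i

/-- gcd of the `d_{ij}` over pairs `i < j`. -/
def gcdD (a b : Fin 4 → ℤ) : ℤ :=
  (Finset.univ.filter fun p : Fin 4 × Fin 4 => p.1 < p.2).gcd fun p => dd a b p.1 p.2

/-- maximum of `|d_{ij}|` over pairs `i < j`. -/
def maxD (a b : Fin 4 → ℤ) : ℤ :=
  (Finset.univ.filter fun p : Fin 4 × Fin 4 => p.1 < p.2).sup' (by decide)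
    fun p => |dd a b p.1 p.2|

/-- The height `H(C)` of the curve defined by the pair of diagonal quadratic forms. -/
def HC (a b : Fin 4 → ℤ) : ℤ := maxD a b / gcdD a b

/-- The pair `(q, r)` is primitive: `gcd_{0 ≤ i < j ≤ 3}(d_ij) = 1`. -/
def PrimPair (a b : Fin 4 → ℤ) : Prop := gcdD a b = 1

/-! The argument works for `X = B^{4k/(8k-1)} / H(C)^{…}` replaced by any real `X ≥ 0`.
The integer `N = 2 ∏_{i<j} d_ij` is nonzero with `|N| ≤ B^967`, and distinct primes dividing `N`
satisfy `∑ log p ≤ log |N|`. If every prime in `(2X, y]` divided `N`, then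
`θ y ≤ θ (2X) + log |N| ≤ 2 log 4 · X + log |N|`, which Chebyshev's lower bound
`θ y ≥ y / 2 - C` rules out for `y = c (X + 1 + log |N|)` with `c` large; finally
`log |N| ≤ 967 log B`. -/

open Finset Filter Asymptotics Real
open scoped Chebyshev

theorem sum_log_le_log_of_prime_dvd {N : ℕ} (hN : N ≠ 0) {s : Finset ℕ}
    (hs : ∀ p ∈ s, p.Prime ∧ p ∣ N) : ∑ p ∈ s, log p ≤ log N := by
  have hdvd : ∏ p ∈ s, p ∣ N :=
    prod_primes_dvd N (fun p hp => (hs p hp).1.prime) fun p hp => (hs p hp).2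
  have hpos : 0 < ∏ p ∈ s, p := prod_pos fun p hp => (hs p hp).1.pos
  rw [← log_prod fun p hp => by exact_mod_cast (hs p hp).1.ne_zero, ← Nat.cast_prod]
  exact log_le_log (by exact_mod_cast hpos) (by exact_mod_cast Nat.le_of_dvd (by omega) hdvd)

namespace Chebyshev

theorem sqrt_mul_log_isLittleO_id : (fun x : ℝ => √x * log x) =o[atTop] id := by
  have h := (isBigO_refl (fun x : ℝ => √x) atTop).mul_isLittleO
    (isLittleO_log_rpow_atTop one_half_pos)
  refine h.congr' EventuallyEq.rfl ?_
  filter_upwards [eventually_ge_atTop 0] with x hx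
  rw [← sqrt_eq_rpow, mul_self_sqrt hx, id]

theorem eventually_half_le_theta : ∀ᶠ x : ℝ in atTop, x / 2 ≤ θ x := by
  filter_upwards [sqrt_mul_log_isLittleO_id.bound (by norm_num : (0 : ℝ) < 1 / 40),
    eventually_ge_atTop 10] with x hsmall hx
  have hlog : log (x + 2) ≤ 2 * log x := by
    calc log (x + 2) ≤ log (x ^ 2) := log_le_log (by linarith) (by nlinarith)
      _ = 2 * log x := by rw [log_pow]; norm_num
  have hsqrt : 1 ≤ √x := by rw [one_le_sqrt]; linarith
  have hlogx : 0 ≤ log x := log_nonneg (by linarith)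
  rw [norm_of_nonneg (by positivity), id, norm_of_nonneg (by linarith)] at hsmall
  have := theta_ge' (x := x) (by linarith)
  nlinarith [log_two_gt_d9]

theorem exists_half_sub_const_le_theta : ∃ C, 0 ≤ C ∧ ∀ x, x / 2 - C ≤ θ x := by
  obtain ⟨x₀, hx₀⟩ := eventually_atTop.mp eventually_half_le_theta
  refine ⟨max x₀ 0, le_max_right _ _, fun x => ?_⟩
  rcases le_total x₀ x with hx | hx
  · linarith [hx₀ x hx, le_max_right x₀ 0]
  · linarith [theta_nonneg x, le_max_left x₀ 0, le_max_right x₀ 0]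

theorem theta_le_theta_add_log_of_prime_dvd {x y : ℝ} {N : ℕ} (hN : N ≠ 0)
    (h : ∀ p : ℕ, p.Prime → x < p → p ≤ y → p ∣ N) : θ y ≤ θ x + log N := by
  rw [theta, ← sum_filter_add_sum_filter_not _ fun p : ℕ => (p : ℝ) ≤ x]
  gcongr
  · refine sum_le_sum_of_subset_of_nonneg (fun p hp => ?_) fun p _ _ => log_natCast_nonneg p
    simp only [mem_filter, mem_Ioc] at hp ⊢
    exact ⟨⟨hp.1.1.1, Nat.le_floor hp.2⟩, hp.1.2⟩
  · refine sum_log_le_log_of_prime_dvd hN fun p hp => ?_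
    simp only [mem_filter, mem_Ioc, not_le] at hp
    exact ⟨hp.1.2, h p hp.1.2 hp.2 ((Nat.le_floor_iff' hp.1.2.ne_zero).mp hp.1.1.2)⟩

end Chebyshev

theorem exists_prime_not_dvd_between : ∃ c : ℝ, 1 ≤ c ∧ ∀ X : ℝ, 0 ≤ X → ∀ N : ℕ, N ≠ 0 →
    ∃ p : ℕ, p.Prime ∧ ¬ p ∣ N ∧ 2 * X < p ∧ p ≤ c * (X + 1 + log N) := by
  obtain ⟨C, hC, hθ⟩ := Chebyshev.exists_half_sub_const_le_theta
  refine ⟨2 * C + 6, by linarith, fun X hX N hN => ?_⟩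
  by_contra! hcon
  set y := (2 * C + 6) * (X + 1 + log N)
  have hlower := hθ y
  have hupper : θ y ≤ θ (2 * X) + log N :=
    Chebyshev.theta_le_theta_add_log_of_prime_dvd hN fun p hp hXp hpy => by
      by_contra hnd; exact (hcon p hp hnd hXp).not_ge hpy
  have hθX := Chebyshev.theta_le_log4_mul_x (by linarith : 0 ≤ 2 * X)
  have hlog4 : log 4 < 3 / 2 := by
    rw [show (4 : ℝ) = 2 ^ 2 by norm_num, log_pow]; linarith [log_two_lt_d9]
  have hlogN : 0 ≤ log N := log_natCast_nonneg N
  -- `y / 2 - C ≤ θ y ≤ 2 log 4 · X + log N`, while `y / 2 - C ≥ 3 X + 3 + 3 log N`.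
  nlinarith

def maxAbsCoeff (a : Fin 4 → ℤ) : ℕ := univ.sup fun i => (a i).natAbs

section DiagonalPair

variable (a b : Fin 4 → ℤ)

theorem abs_le_maxAbsCoeff (i : Fin 4) : |(a i : ℝ)| ≤ maxAbsCoeff a := by
  rw [← Int.cast_abs, ← Nat.cast_natAbs]
  exact_mod_cast le_sup (f := fun i => (a i).natAbs) (mem_univ i)

theorem abs_dd_le (i j : Fin 4) :
    |(dd a b i j : ℝ)| ≤ 2 * ((maxAbsCoeff a : ℝ) * maxAbsCoeff b) := by
  have hmul : ∀ i j, |(a i : ℝ) * b j| ≤ (maxAbsCoeff a : ℝ) * maxAbsCoeff b := fun i j => by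
    rw [abs_mul]
    exact mul_le_mul (abs_le_maxAbsCoeff a i) (abs_le_maxAbsCoeff b j) (abs_nonneg _)
      (Nat.cast_nonneg _)
  rw [dd, Int.cast_sub, Int.cast_mul, Int.cast_mul, two_mul]
  exact (abs_sub _ _).trans (add_le_add (hmul i j) (hmul j i))

theorem abs_two_mul_prod_dd_le {B : ℝ} (hB : 2 ≤ B)
    (hab : (maxAbsCoeff a : ℝ) * maxAbsCoeff b ≤ B ^ 160) :
    |((2 * ∏ pr ∈ univ.filter fun pr : Fin 4 × Fin 4 => pr.1 < pr.2, dd a b pr.1 pr.2 : ℤ) : ℝ)|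
      ≤ B ^ 967 := by
  have hcard : (univ.filter fun pr : Fin 4 × Fin 4 => pr.1 < pr.2).card = 6 := by decide
  calc _ = 2 * ∏ pr ∈ univ.filter fun pr : Fin 4 × Fin 4 => pr.1 < pr.2,
          |(dd a b pr.1 pr.2 : ℝ)| := by
        push_cast; rw [abs_mul, abs_prod, abs_two]
    _ ≤ 2 * (2 * ((maxAbsCoeff a : ℝ) * maxAbsCoeff b)) ^ 6 := by
        rw [← hcard, ← prod_const]
        gcongr with pr
        exact abs_dd_le a b _ _
    _ ≤ B * (B * B ^ 160) ^ 6 := by gcongr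
    _ = B ^ 967 := by ring

theorem HC_nonneg (h : PrimPair a b) : 0 ≤ HC a b := by
  have hmem : ((0 : Fin 4), (1 : Fin 4)) ∈ univ.filter fun p : Fin 4 × Fin 4 => p.1 < p.2 := by
    decide
  rw [HC, h, Int.ediv_one, maxD]
  exact le_sup'_of_le _ hmem (abs_nonneg _)

end DiagonalPair

/-- There is an absolute constant `c ≥ 1` such that: for every primitive
pair of diagonal quadratic forms with all `d_ij ≠ 0`, every `B ≥ 3` with
`(max|a_i|)(max|b_i|) ≤ B^160` and every `k ≥ 1`, there is a prime `p` of good reduction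
(i.e. `p ∤ 2·∏_{i<j} d_ij`) with
`2·B^{4k/(8k-1)}/H(C)^{(4k²-4k+1)/(4k(8k-1))} < p ≤ c·(B^{4k/(8k-1)}/H(C)^{(4k²-4k+1)/(4k(8k-1))} + 1 + log B)`. -/
theorem statement10 :
    ∃ c : ℝ, 1 ≤ c ∧
      ∀ a b : Fin 4 → ℤ, PrimPair a b →
        (∀ i j : Fin 4, i < j → dd a b i j ≠ 0) →
        ∀ B : ℝ, 3 ≤ B →
          ((Finset.univ.sup fun i => (a i).natAbs : ℕ) : ℝ) *
              ((Finset.univ.sup fun i => (b i).natAbs : ℕ) : ℝ) ≤ B ^ (160 : ℕ) →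
          ∀ k : ℕ, 1 ≤ k →
            ∃ p : ℕ, p.Prime ∧
              ¬ (p : ℤ) ∣ 2 * ∏ pr ∈ Finset.univ.filter
                  fun pr : Fin 4 × Fin 4 => pr.1 < pr.2, dd a b pr.1 pr.2 ∧
              2 * B ^ ((4 * (k : ℝ)) / (8 * (k : ℝ) - 1)) /
                  (HC a b : ℝ) ^ ((4 * (k : ℝ) ^ 2 - 4 * (k : ℝ) + 1) /
                    (4 * (k : ℝ) * (8 * (k : ℝ) - 1))) < (p : ℝ) ∧
              (p : ℝ) ≤ c * (B ^ ((4 * (k : ℝ)) / (8 * (k : ℝ) - 1)) /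
                  (HC a b : ℝ) ^ ((4 * (k : ℝ) ^ 2 - 4 * (k : ℝ) + 1) /
                    (4 * (k : ℝ) * (8 * (k : ℝ) - 1))) + 1 + Real.log B) := by
  obtain ⟨c, hc, hprime⟩ := exists_prime_not_dvd_between
  refine ⟨967 * c, by linarith, fun a b hprim hd B hB hab k _ => ?_⟩
  set X := B ^ ((4 * (k : ℝ)) / (8 * (k : ℝ) - 1)) / (HC a b : ℝ) ^
    ((4 * (k : ℝ) ^ 2 - 4 * (k : ℝ) + 1) / (4 * (k : ℝ) * (8 * (k : ℝ) - 1)))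
  set N := 2 * ∏ pr ∈ univ.filter fun pr : Fin 4 × Fin 4 => pr.1 < pr.2, dd a b pr.1 pr.2
  have hX : 0 ≤ X :=
    div_nonneg (rpow_nonneg (by linarith) _) (rpow_nonneg (by exact_mod_cast HC_nonneg a b hprim) _)
  have hN : N ≠ 0 :=
    mul_ne_zero two_ne_zero (prod_ne_zero_iff.mpr fun pr hpr => hd _ _ (mem_filter.mp hpr).2)
  have hlogN : log (N.natAbs : ℝ) ≤ 967 * log B := by
    rw [Nat.cast_natAbs, Int.cast_abs]
    calc log |(N : ℝ)| ≤ log (B ^ 967) :=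
          log_le_log (by positivity) (abs_two_mul_prod_dd_le a b (by linarith) hab)
      _ = 967 * log B := by rw [log_pow]; norm_num
  obtain ⟨p, hp, hpN, hXp, hpX⟩ := hprime X hX N.natAbs (Int.natAbs_ne_zero.mpr hN)
  refine ⟨p, hp, fun h => hpN (Int.natCast_dvd.mp h), by rwa [mul_div_assoc], ?_⟩
  have hlogB : 0 ≤ log B := log_nonneg (by linarith)
  calc (p : ℝ) ≤ c * (X + 1 + 967 * log B) := hpX.trans (by gcongr)
    _ ≤ 967 * c * (X + 1 + log B) := by nlinarith
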